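/- Let M, m, n be integers with 1 ≤ m < n ≤ M, and fix I > 0 and R > 0. Let G₁,…,G_M be i.i.d. exponential(1) channel gains with order statistics G_(1) ≤ ⋯ ≤ G_(M); write X = G_(m), Y = G_(n), and for transmit SNR ρ > 0 set a_n²(ρ) = max{0, (X − I/ρ)/(X(1+I))} and P_o^n(ρ) = P(log₂(1 + a_n²(ρ)·ρ·Y) < R). Then lim_{ρ→∞} (− log P_o^n(ρ) / log ρ) = m; i.e., the diversity order experienced by the n-th (stronger) user in CR-NOMA equals m, the index of the weaker paired user, regardless of n. -/

import Mathlib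

/-!
Write `X = G_(m)`, `Y = G_(n)`. If `0 ≤ X ≤ I/ρ` the power coefficient vanishes, so the user is in
outage; if `X > 2I/ρ` the coefficient is at least `1/(2(1+I))`, so outage forces `Y ≤ c/ρ`. For
i.i.d. exponential gains, `(t/e)^k ≤ P(G_(k) ≤ t) ≤ C(M,k) t^k` on `[0, 1]` (some `k` of the
gains lie below `t`). Hence the outage probability lies between constant multiples of `ρ^(-m)`,
the `ρ^(-n)` contribution of `Y` being smaller since `n > m`, and `-log P / log ρ → m`.
-/

open MeasureTheory ProbabilityTheory Filter

/-- The `k`-th smallest entry (1-indexed) of a finite tuple of reals. -/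
noncomputable def orderStat {M : ℕ} (g : Fin M → ℝ) (k : ℕ) : ℝ :=
  ((List.ofFn g).insertionSort (· ≤ ·)).getD (k - 1) 0

theorem List.Pairwise.getElem_le_iff_lt_countP {α : Type*} [LinearOrder α] {l : List α}
    (hl : l.Pairwise (· ≤ ·)) {i : ℕ} (hi : i < l.length) (t : α) :
    l[i] ≤ t ↔ i < l.countP (· ≤ t) := by
  constructor
  · intro h
    have hprefix : (l.take (i + 1)).countP (· ≤ t) = i + 1 := by
      rw [List.countP_eq_length.2, List.length_take_of_le hi]
      intro a ha
      obtain ⟨j, hj, rfl⟩ := List.getElem_of_mem ha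
      rw [List.length_take_of_le hi] at hj
      have hji := hl.rel_get_of_le (a := ⟨j, by omega⟩) (b := ⟨i, hi⟩) (Fin.mk_le_mk.2 (by omega))
      simpa using hji.trans h
    have hsub := (List.take_sublist (i + 1) l).countP_le (p := (· ≤ t))
    omega
  · intro h
    by_contra! hlt
    have hsuffix : (l.drop i).countP (· ≤ t) = 0 := by
      rw [List.countP_eq_zero]
      intro a ha
      obtain ⟨j, hj, rfl⟩ := List.getElem_of_mem ha
      rw [List.length_drop] at hj
      simpa using hlt.trans_le (hl.rel_get_of_le (a := ⟨i, hi⟩) (b := ⟨i + j, by omega⟩) (by simp))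
    have hsplit := List.countP_append (p := (· ≤ t)) (l₁ := l.take i) (l₂ := l.drop i)
    have hprefix := List.countP_le_length (p := (· ≤ t)) (l := l.take i)
    rw [List.take_append_drop] at hsplit
    rw [List.length_take] at hprefix
    omega

theorem orderStat_le_iff {M : ℕ} (g : Fin M → ℝ) {k : ℕ} (hk : 1 ≤ k) (hkM : k ≤ M) (t : ℝ) :
    orderStat g k ≤ t ↔ k ≤ (Finset.univ.filter (fun i => g i ≤ t)).card := by
  have hsorted := List.pairwise_insertionSort (· ≤ ·) (List.ofFn g)
  have hlen : k - 1 < ((List.ofFn g).insertionSort (· ≤ ·)).length := by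
    simp only [List.length_insertionSort, List.length_ofFn]; omega
  have hcount : (List.ofFn g).countP (· ≤ t) = (Finset.univ.filter (fun i => g i ≤ t)).card := by
    rw [List.ofFn_eq_map, List.countP_map, List.countP_eq_length_filter]
    rfl
  rw [orderStat, List.getD_eq_getElem _ _ hlen, hsorted.getElem_le_iff_lt_countP hlen,
    (List.perm_insertionSort _ _).countP_eq, hcount]
  omega

theorem orderStat_nonneg {M : ℕ} {g : Fin M → ℝ} (hg : ∀ i, 0 ≤ g i) (k : ℕ) :
    0 ≤ orderStat g k := by
  unfold orderStat
  rcases lt_or_ge (k - 1) ((List.ofFn g).insertionSort (· ≤ ·)).length with h | h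
  · rw [List.getD_eq_getElem _ _ h]
    obtain ⟨i, hi⟩ := List.mem_ofFn.1 ((List.perm_insertionSort _ _).mem_iff.1 (List.getElem_mem h))
    exact hi ▸ hg i
  · rw [List.getD_eq_default _ _ h]

section OrderStatistics

variable {Ω : Type*} [MeasurableSpace Ω] {μ : Measure Ω} {M : ℕ} {G : Fin M → Ω → ℝ}
  {ν : Measure ℝ}

theorem measure_biInter_le_eq_pow (hmeas : ∀ i, Measurable (G i)) (hindep : iIndepFun G μ)
    (hdist : ∀ i, μ.map (G i) = ν) (s : Finset (Fin M)) (t : ℝ) :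
    μ (⋂ i ∈ s, {ω | G i ω ≤ t}) = ν (Set.Iic t) ^ s.card := by
  refine (hindep.measure_inter_preimage_eq_mul s (sets := fun _ => Set.Iic t)
    (fun _ _ => measurableSet_Iic)).trans (Finset.prod_eq_pow_card fun i _ => ?_)
  rw [← hdist i, Measure.map_apply (hmeas i) measurableSet_Iic]

theorem measure_orderStat_le_le_choose_mul_pow (hmeas : ∀ i, Measurable (G i))
    (hindep : iIndepFun G μ) (hdist : ∀ i, μ.map (G i) = ν) {k : ℕ} (hk : 1 ≤ k) (hkM : k ≤ M)
    (t : ℝ) :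
    μ {ω | orderStat (G · ω) k ≤ t} ≤ M.choose k * ν (Set.Iic t) ^ k := by
  have hcover : {ω | orderStat (G · ω) k ≤ t} ⊆
      ⋃ s ∈ Finset.powersetCard k Finset.univ, ⋂ i ∈ s, {ω | G i ω ≤ t} := by
    intro ω hω
    obtain ⟨s, hs, hcard⟩ := Finset.exists_subset_card_eq ((orderStat_le_iff _ hk hkM t).1 hω)
    refine Set.mem_biUnion (Finset.mem_powersetCard.2 ⟨Finset.subset_univ _, hcard⟩) ?_
    exact Set.mem_iInter₂.2 fun i hi => (Finset.mem_filter.1 (hs hi)).2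
  calc μ {ω | orderStat (G · ω) k ≤ t}
      ≤ ∑ s ∈ Finset.powersetCard k Finset.univ, μ (⋂ i ∈ s, {ω | G i ω ≤ t}) :=
        (measure_mono hcover).trans (measure_biUnion_finset_le _ _)
    _ = M.choose k * ν (Set.Iic t) ^ k := by
        rw [Finset.sum_congr rfl fun s hs => by
          rw [measure_biInter_le_eq_pow hmeas hindep hdist, (Finset.mem_powersetCard.1 hs).2]]
        simp

theorem pow_le_measure_orderStat_le (hmeas : ∀ i, Measurable (G i)) (hindep : iIndepFun G μ)
    (hdist : ∀ i, μ.map (G i) = ν) {k : ℕ} (hk : 1 ≤ k) (hkM : k ≤ M) (t : ℝ) :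
    ν (Set.Iic t) ^ k ≤ μ {ω | orderStat (G · ω) k ≤ t} := by
  obtain ⟨s, -, hcard⟩ := Finset.exists_subset_card_eq
    (show k ≤ (Finset.univ : Finset (Fin M)).card by simpa using hkM)
  calc ν (Set.Iic t) ^ k = μ (⋂ i ∈ s, {ω | G i ω ≤ t}) := by
        rw [measure_biInter_le_eq_pow hmeas hindep hdist, hcard]
    _ ≤ μ {ω | orderStat (G · ω) k ≤ t} := by
        refine measure_mono fun ω hω => (orderStat_le_iff _ hk hkM t).2 (hcard ▸ ?_)
        exact Finset.card_le_card fun i hi =>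
          Finset.mem_filter.2 ⟨Finset.mem_univ _, Set.mem_iInter₂.1 hω i hi⟩

end OrderStatistics

theorem ProbabilityTheory.expMeasure_Iic {r t : ℝ} (hr : 0 < r) (ht : 0 ≤ t) :
    expMeasure r (Set.Iic t) = ENNReal.ofReal (1 - Real.exp (-(r * t))) := by
  have := isProbabilityMeasure_expMeasure hr
  rw [← ofReal_cdf, cdf_expMeasure_eq hr, if_pos ht]

theorem ProbabilityTheory.ae_pos_expMeasure {r : ℝ} (hr : 0 < r) : ∀ᵐ x ∂expMeasure r, 0 < x := by
  have h := expMeasure_Iic hr le_rfl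
  rw [mul_zero, neg_zero, Real.exp_zero, sub_self, ENNReal.ofReal_zero] at h
  rw [ae_iff]
  simp only [not_lt]
  exact h

theorem Real.exp_neg_one_mul_le_one_sub_exp_neg {t : ℝ} (ht₀ : 0 ≤ t) (ht₁ : t ≤ 1) :
    Real.exp (-1) * t ≤ 1 - Real.exp (-t) := by
  calc Real.exp (-1) * t ≤ Real.exp (-t) * t := by gcongr
    _ ≤ 1 - Real.exp (-t) := by
        rw [Real.exp_neg, ← sub_nonneg]
        have := Real.add_one_le_exp t
        have := Real.exp_pos t
        field_simp
        linarith

section ExponentialOrderStatistics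

variable {Ω : Type*} [MeasurableSpace Ω] {μ : Measure Ω} {M : ℕ} {G : Fin M → Ω → ℝ} {k : ℕ}
  {t : ℝ}

theorem measureReal_orderStat_le_le_choose_mul_pow (hmeas : ∀ i, Measurable (G i))
    (hindep : iIndepFun G μ) (hdist : ∀ i, μ.map (G i) = expMeasure 1) (hk : 1 ≤ k)
    (hkM : k ≤ M) (ht : 0 ≤ t) :
    μ.real {ω | orderStat (G · ω) k ≤ t} ≤ M.choose k * t ^ k := by
  have h := measure_orderStat_le_le_choose_mul_pow hmeas hindep hdist hk hkM t
  rw [expMeasure_Iic one_pos ht, one_mul] at h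
  have hF : 0 ≤ 1 - Real.exp (-t) := sub_nonneg.2 (Real.exp_le_one_iff.2 (neg_nonpos.2 ht))
  calc μ.real {ω | orderStat (G · ω) k ≤ t}
      ≤ (M.choose k * ENNReal.ofReal (1 - Real.exp (-t)) ^ k).toReal :=
        ENNReal.toReal_mono (by finiteness) h
    _ = M.choose k * (1 - Real.exp (-t)) ^ k := by
        rw [ENNReal.toReal_mul, ENNReal.toReal_pow, ENNReal.toReal_natCast,
          ENNReal.toReal_ofReal hF]
    _ ≤ M.choose k * t ^ k := by
        gcongr
        linarith [Real.one_sub_le_exp_neg t]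

theorem exp_neg_one_mul_pow_le_measureReal_orderStat_le [IsFiniteMeasure μ]
    (hmeas : ∀ i, Measurable (G i)) (hindep : iIndepFun G μ)
    (hdist : ∀ i, μ.map (G i) = expMeasure 1) (hk : 1 ≤ k) (hkM : k ≤ M) (ht₀ : 0 ≤ t)
    (ht₁ : t ≤ 1) :
    (Real.exp (-1) * t) ^ k ≤ μ.real {ω | orderStat (G · ω) k ≤ t} := by
  have h := pow_le_measure_orderStat_le hmeas hindep hdist hk hkM t
  rw [expMeasure_Iic one_pos ht₀, one_mul] at h
  calc (Real.exp (-1) * t) ^ k ≤ (1 - Real.exp (-t)) ^ k := by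
        gcongr
        exact Real.exp_neg_one_mul_le_one_sub_exp_neg ht₀ ht₁
    _ = (ENNReal.ofReal (1 - Real.exp (-t)) ^ k).toReal := by
        rw [ENNReal.toReal_pow,
          ENNReal.toReal_ofReal (sub_nonneg.2 (Real.exp_le_one_iff.2 (neg_nonpos.2 ht₀)))]
    _ ≤ μ.real {ω | orderStat (G · ω) k ≤ t} := ENNReal.toReal_mono (by finiteness) h

end ExponentialOrderStatistics

noncomputable def crnomaRate (I ρ X Y : ℝ) : ℝ :=
  Real.logb 2 (1 + max 0 ((X - I / ρ) / (X * (1 + I))) * ρ * Y)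

section Rate

variable {I R ρ X Y : ℝ}

theorem crnomaRate_lt_of_le (hI : 0 ≤ I) (hR : 0 < R) (hX₀ : 0 ≤ X) (hX : X ≤ I / ρ) :
    crnomaRate I ρ X Y < R := by
  have : (X - I / ρ) / (X * (1 + I)) ≤ 0 :=
    div_nonpos_of_nonpos_of_nonneg (by linarith) (by positivity)
  simpa [crnomaRate, max_eq_left this] using hR

theorem le_of_crnomaRate_lt (hI : 0 < I) (hR : 0 < R) (hρ : 0 < ρ) (hX : 2 * I / ρ < X)
    (h : crnomaRate I ρ X Y < R) : Y ≤ 2 * (1 + I) * (2 ^ R - 1) / ρ := by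
  set a := max 0 ((X - I / ρ) / (X * (1 + I)))
  have hX₀ : 0 < X := lt_trans (by positivity) hX
  have ha : 1 / (2 * (1 + I)) ≤ a := by
    refine le_max_of_le_right ?_
    rw [div_le_div_iff₀ (by positivity) (by positivity)]
    have : X ≤ 2 * (X - I / ρ) := by rw [mul_div_assoc] at hX; linarith
    nlinarith
  have hlt : 1 + a * ρ * Y < 2 ^ R := by
    by_cases hpos : 0 < 1 + a * ρ * Y
    · exact (Real.logb_lt_iff_lt_rpow one_lt_two hpos).1 h
    · linarith [Real.one_lt_rpow one_lt_two hR]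
  rw [le_div_iff₀ hρ]
  rcases le_or_gt Y 0 with hY | hY
  · nlinarith [Real.one_lt_rpow one_lt_two hR]
  · have hρY : ρ * Y / (2 * (1 + I)) < 2 ^ R - 1 := by
      calc ρ * Y / (2 * (1 + I)) = 1 / (2 * (1 + I)) * (ρ * Y) := by ring
        _ ≤ a * (ρ * Y) := by gcongr
        _ < 2 ^ R - 1 := by linarith
    rw [div_lt_iff₀ (by positivity)] at hρY
    linarith

end Rate

section Outage

variable {Ω : Type*} [MeasurableSpace Ω] {μ : Measure Ω} [IsFiniteMeasure μ] {M m n : ℕ}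
  {G : Fin M → Ω → ℝ} {I R ρ : ℝ}

def outageEvent (G : Fin M → Ω → ℝ) (m n : ℕ) (I R ρ : ℝ) : Set Ω :=
  {ω | crnomaRate I ρ (orderStat (G · ω) m) (orderStat (G · ω) n) < R}

theorem exp_neg_one_mul_pow_div_le_measureReal_outageEvent (hmeas : ∀ i, Measurable (G i))
    (hindep : iIndepFun G μ) (hdist : ∀ i, μ.map (G i) = expMeasure 1) (hm : 1 ≤ m)
    (hmM : m ≤ M) (hI : 0 < I) (hR : 0 < R) (hρ : I ≤ ρ) :
    (Real.exp (-1) * I) ^ m / ρ ^ m ≤ μ.real (outageEvent G m n I R ρ) := by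
  have hρ₀ : 0 < ρ := hI.trans_le hρ
  have hnonneg : ∀ᵐ ω ∂μ, ∀ i, 0 ≤ G i ω := ae_all_iff.2 fun i =>
    ae_of_ae_map (hmeas i).aemeasurable <| by
      rw [hdist i]
      exact (ae_pos_expMeasure one_pos).mono fun x hx => hx.le
  calc (Real.exp (-1) * I) ^ m / ρ ^ m = (Real.exp (-1) * (I / ρ)) ^ m := by
        rw [← div_pow, mul_div_assoc]
    _ ≤ μ.real {ω | orderStat (G · ω) m ≤ I / ρ} :=
        exp_neg_one_mul_pow_le_measureReal_orderStat_le hmeas hindep hdist hm hmM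
          (by positivity) ((div_le_one hρ₀).2 hρ)
    _ ≤ μ.real (outageEvent G m n I R ρ) :=
        ENNReal.toReal_mono (by finiteness) <| measure_mono_ae <| hnonneg.mono fun ω hω hX =>
          crnomaRate_lt_of_le hI.le hR (orderStat_nonneg hω m) hX

theorem measureReal_outageEvent_le (hmeas : ∀ i, Measurable (G i)) (hindep : iIndepFun G μ)
    (hdist : ∀ i, μ.map (G i) = expMeasure 1) (hm : 1 ≤ m) (hmn : m < n) (hnM : n ≤ M)
    (hI : 0 < I) (hR : 0 < R) (hρ : 1 ≤ ρ) :
    μ.real (outageEvent G m n I R ρ) ≤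
      (M.choose m * (2 * I) ^ m + M.choose n * (2 * (1 + I) * (2 ^ R - 1)) ^ n) / ρ ^ m := by
  set c := 2 * (1 + I) * (2 ^ R - 1)
  have hρ₀ : 0 < ρ := one_pos.trans_le hρ
  have hc : 0 ≤ c := by
    have := Real.one_lt_rpow one_lt_two hR
    positivity
  have hcover : outageEvent G m n I R ρ ⊆
      {ω | orderStat (G · ω) m ≤ 2 * I / ρ} ∪ {ω | orderStat (G · ω) n ≤ c / ρ} :=
    fun ω hω => or_iff_not_imp_left.2 fun hX => le_of_crnomaRate_lt hI hR hρ₀ (not_le.1 hX) hω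
  calc μ.real (outageEvent G m n I R ρ)
      ≤ μ.real {ω | orderStat (G · ω) m ≤ 2 * I / ρ} +
          μ.real {ω | orderStat (G · ω) n ≤ c / ρ} :=
        (measureReal_mono hcover).trans (measureReal_union_le _ _)
    _ ≤ M.choose m * (2 * I / ρ) ^ m + M.choose n * (c / ρ) ^ n := by
        gcongr
        · exact measureReal_orderStat_le_le_choose_mul_pow hmeas hindep hdist hm
            (hmn.le.trans hnM) (by positivity)
        · exact measureReal_orderStat_le_le_choose_mul_pow hmeas hindep hdist
            (hm.trans hmn.le) hnM (by positivity)
    _ ≤ M.choose m * (2 * I) ^ m / ρ ^ m + M.choose n * c ^ n / ρ ^ m := by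
        rw [div_pow, div_pow, mul_div_assoc, mul_div_assoc]
        gcongr
    _ = (M.choose m * (2 * I) ^ m + M.choose n * c ^ n) / ρ ^ m := by ring

end Outage

theorem tendsto_neg_log_div_log_of_le_of_le {f : ℝ → ℝ} {a b d : ℝ} (ha : 0 < a)
    (hlow : ∀ᶠ ρ in atTop, a / ρ ^ d ≤ f ρ) (hup : ∀ᶠ ρ in atTop, f ρ ≤ b / ρ ^ d) :
    Tendsto (fun ρ => -(Real.log (f ρ) / Real.log ρ)) atTop (nhds d) := by
  have hlim (c : ℝ) : Tendsto (fun ρ => d - Real.log c / Real.log ρ) atTop (nhds d) := by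
    simpa using tendsto_const_nhds.sub (tendsto_const_nhds.div_atTop Real.tendsto_log_atTop)
  have hsandwich : ∀ᶠ ρ in atTop, Real.log a ≤ Real.log (f ρ * ρ ^ d) ∧
      Real.log (f ρ * ρ ^ d) ≤ Real.log b ∧ 0 < Real.log ρ ∧
      -(Real.log (f ρ) / Real.log ρ) = d - Real.log (f ρ * ρ ^ d) / Real.log ρ := by
    filter_upwards [hlow, hup, eventually_gt_atTop 1] with ρ hl hu hρ
    have hρd : 0 < ρ ^ d := Real.rpow_pos_of_pos (by linarith) d
    have hf : 0 < f ρ := lt_of_lt_of_le (by positivity) hl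
    have hlog : 0 < Real.log ρ := Real.log_pos hρ
    refine ⟨Real.log_le_log ha ((div_le_iff₀ hρd).1 hl),
      Real.log_le_log (by positivity) ((le_div_iff₀ hρd).1 hu), hlog, ?_⟩
    rw [Real.log_mul hf.ne' hρd.ne', Real.log_rpow (by linarith)]
    field_simp
    ring
  refine tendsto_of_tendsto_of_tendsto_of_le_of_le' (hlim b) (hlim a) ?_ ?_
  · filter_upwards [hsandwich] with ρ ⟨_, hb, hlog, heq⟩
    rw [heq]
    gcongr
  · filter_upwards [hsandwich] with ρ ⟨ha, _, hlog, heq⟩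
    rw [heq]
    gcongr

/-- Theorem 2, diversity order: in CR-NOMA with `X, Y` the `m`-th
and `n`-th order statistics of `M` i.i.d. exponential(1) channel gains, targeted
SINR `I > 0`, target rate `R > 0`, power coefficient
`a_n²(ρ) = max{0, (X − I/ρ)/(X(1+I))}` and outage probability
`P_o^n(ρ) = P(log₂(1 + a_n²(ρ)ρY) < R)`, one has
`lim_{ρ→∞} (− log P_o^n(ρ)/log ρ) = m`: the diversity order of the `n`-th user
equals `m`, regardless of `n`. -/
theorem crnoma_diversity_order {Ω : Type*} [MeasureSpace Ω]
    [IsProbabilityMeasure (ℙ : Measure Ω)]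
    (M m n : ℕ) (hm : 1 ≤ m) (hmn : m < n) (hnM : n ≤ M)
    (I R : ℝ) (hI : 0 < I) (hR : 0 < R)
    (G : Fin M → Ω → ℝ) (hGmeas : ∀ i, Measurable (G i))
    (hindep : iIndepFun G ℙ)
    (hdist : ∀ i, Measure.map (G i) ℙ = expMeasure 1) :
    Tendsto (fun ρ : ℝ =>
        -(Real.log ((ℙ {ω |
            Real.logb 2 (1 +
              max 0 ((orderStat (fun i => G i ω) m - I / ρ) /
                (orderStat (fun i => G i ω) m * (1 + I))) * ρ *
              orderStat (fun i => G i ω) n) < R}).toReal) /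
          Real.log ρ))
      atTop (nhds (m : ℝ)) := by
  have hlow := (eventually_ge_atTop I).mono fun ρ hρ =>
    exp_neg_one_mul_pow_div_le_measureReal_outageEvent (n := n) (R := R) hGmeas hindep hdist hm
      (hmn.le.trans hnM) hI hR hρ
  have hup := (eventually_ge_atTop 1).mono fun ρ hρ =>
    measureReal_outageEvent_le hGmeas hindep hdist hm hmn hnM hI hR hρ
  simp only [← Real.rpow_natCast] at hlow hup
  exact tendsto_neg_log_div_log_of_le_of_le (by positivity) hlow hup
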